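/- Let n ≥ 1, 0 < α < n and r > 0. Then there exists a constant C depending only on n and α such that for every locally integrable f : ℝⁿ → ℝ and every x ∈ ℝⁿ, Mʳ(Mʳ_α f)(x) ≤ C · M^{2r}_α f(x). -/

import Mathlib

open MeasureTheory Metric ENNReal

/-- The cut-off fractional maximal function `Mʳ_α f (x) = sup_{0<ρ<r} ρ^α ⨍_{B_ρ(x)} f`;
`Mʳ := Mʳ₀` is the cut-off Hardy–Littlewood maximal function. -/
noncomputable def fracMaxLt {n : ℕ} (α r : ℝ)
    (f : EuclideanSpace ℝ (Fin n) → ℝ≥0∞) (x : EuclideanSpace ℝ (Fin n)) : ℝ≥0∞ :=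
  ⨆ (ρ : ℝ) (_ : 0 < ρ) (_ : ρ < r), ENNReal.ofReal (ρ ^ α) * ⨍⁻ y in ball x ρ, f y ∂volume

/-!
Fix `ρ < r` and `z ∈ B_ρ(x)`. A radius `s ≥ ρ` is handled by `B_s(z) ⊆ B_{s+ρ}(x)` with
`s + ρ ≤ 2s` and `s + ρ < 2r`, at the cost of a factor `2ⁿ` against `M^{2r}_α f(x)`. A radius
`s < ρ` is compared with the dyadic radius `ρ/2ᵏ ∈ [s, 2s]`, so `Mʳ_α f(z)` is dominated by
`2ⁿ (∑ₖ (ρ/2ᵏ)^α ⨍_{B_{ρ/2ᵏ}(z)} |f| + M^{2r}_α f(x))`. Averaging over `z ∈ B_ρ(x)`, Fubini gives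
`∫_{B_ρ(x)} ⨍_{B_t(z)} |f| dz ≤ ∫_{B_{2ρ}(x)} |f|` for `t ≤ ρ`, and the remaining factor
`∑ₖ (ρ/2ᵏ)^α = ρ^α / (1 - 2^{-α})` is finite because `α > 0`.
-/

lemma ofReal_rpow_div_two_pow {ρ : ℝ} (hρ : 0 ≤ ρ) (α : ℝ) (k : ℕ) :
    ENNReal.ofReal ((ρ / 2 ^ k) ^ α) = ENNReal.ofReal (ρ ^ α) * (2 ^ (-α)) ^ k := by
  rw [Real.div_rpow hρ (by positivity), ← Real.rpow_natCast, ← Real.rpow_mul zero_le_two,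
    mul_comm, Real.rpow_mul zero_le_two, Real.rpow_natCast, div_eq_mul_inv, ← inv_pow,
    ← Real.rpow_neg zero_le_two, ENNReal.ofReal_mul (by positivity),
    ENNReal.ofReal_pow (by positivity), ← ENNReal.ofReal_rpow_of_pos two_pos, ENNReal.ofReal_ofNat]

lemma tsum_ofReal_rpow_div_two_pow {ρ : ℝ} (hρ : 0 ≤ ρ) (α : ℝ) :
    ∑' k : ℕ, ENNReal.ofReal ((ρ / 2 ^ k) ^ α) = ENNReal.ofReal (ρ ^ α) * (1 - 2 ^ (-α))⁻¹ := by
  simp_rw [ofReal_rpow_div_two_pow hρ, ENNReal.tsum_mul_left, ENNReal.tsum_geometric]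

section AddHaar

variable {E : Type*} [NormedAddCommGroup E] [NormedSpace ℝ E] [FiniteDimensional ℝ E]
  [MeasurableSpace E] [BorelSpace E] (μ : Measure E) [μ.IsAddHaarMeasure]

lemma setLAverage_ball_le_of_subset {g : E → ℝ≥0∞} {x z : E} {s t c : ℝ} (hs : 0 < s)
    (hsub : ball z s ⊆ ball x t) (htc : t ≤ c * s) :
    ⨍⁻ y in ball z s, g y ∂μ ≤
      ENNReal.ofReal (c ^ Module.finrank ℝ E) * ⨍⁻ y in ball x t, g y ∂μ := by
  have hc : 0 < c := by
    have : 0 < t := dist_nonneg.trans_lt (mem_ball.mp (hsub (mem_ball_self hs)))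
    exact pos_of_mul_pos_left (this.trans_le htc) hs.le
  have hc0 : ENNReal.ofReal (c ^ Module.finrank ℝ E) ≠ 0 := by positivity
  have hvol : μ (ball x t) ≤ ENNReal.ofReal (c ^ Module.finrank ℝ E) * μ (ball z s) := by
    calc μ (ball x t) ≤ μ (ball x (c * s)) := measure_mono (ball_subset_ball htc)
      _ = _ := by
        rw [Measure.addHaar_ball_mul_of_pos μ x hc, Measure.addHaar_ball_center μ z]
  rw [setLAverage_eq, setLAverage_eq, ← ENNReal.mul_div_mul_left _ _ hc0 ofReal_ne_top,
    mul_div_assoc]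
  gcongr

lemma rpow_mul_setLAverage_ball_le {g : E → ℝ≥0∞} {α : ℝ} (hα : 0 ≤ α) {x z : E} {s t : ℝ}
    (hs : 0 < s) (hst : s ≤ t) (ht : t ≤ 2 * s) (hsub : ball z s ⊆ ball x t) :
    ENNReal.ofReal (s ^ α) * ⨍⁻ y in ball z s, g y ∂μ ≤
      2 ^ Module.finrank ℝ E * (ENNReal.ofReal (t ^ α) * ⨍⁻ y in ball x t, g y ∂μ) := by
  have hpow : ENNReal.ofReal (s ^ α) ≤ ENNReal.ofReal (t ^ α) :=
    ENNReal.ofReal_le_ofReal (Real.rpow_le_rpow hs.le hst hα)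
  have havg := setLAverage_ball_le_of_subset μ (g := g) hs hsub ht
  rw [ENNReal.ofReal_pow zero_le_two, ENNReal.ofReal_ofNat] at havg
  calc ENNReal.ofReal (s ^ α) * ⨍⁻ y in ball z s, g y ∂μ
      ≤ ENNReal.ofReal (t ^ α) * (2 ^ Module.finrank ℝ E * ⨍⁻ y in ball x t, g y ∂μ) := by
        gcongr
    _ = _ := by ring

lemma rpow_mul_setLAverage_ball_le_tsum {g : E → ℝ≥0∞} {α : ℝ} (hα : 0 ≤ α) (z : E)
    {ρ s : ℝ} (hs : 0 < s) (hsρ : s ≤ ρ) :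
    ENNReal.ofReal (s ^ α) * ⨍⁻ y in ball z s, g y ∂μ ≤
      2 ^ Module.finrank ℝ E *
        ∑' k : ℕ, ENNReal.ofReal ((ρ / 2 ^ k) ^ α) * ⨍⁻ y in ball z (ρ / 2 ^ k), g y ∂μ := by
  obtain ⟨k, hk, hk'⟩ := exists_nat_pow_near ((one_le_div hs).mpr hsρ) one_lt_two
  have hst : s ≤ ρ / 2 ^ k := by
    rwa [le_div_iff₀ hs, mul_comm, ← le_div_iff₀ (by positivity)] at hk
  have hts : ρ / 2 ^ k ≤ 2 * s := by
    rw [div_lt_iff₀ hs, pow_succ, mul_assoc, ← div_lt_iff₀' (by positivity)] at hk'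
    exact hk'.le
  refine (rpow_mul_setLAverage_ball_le μ hα hs hst hts (ball_subset_ball hst)).trans ?_
  gcongr
  exact ENNReal.le_tsum k

lemma measurable_uncurry_indicator_ball {g : E → ℝ≥0∞} (hg : Measurable g) (t : ℝ) :
    Measurable (Function.uncurry fun z y => (ball z t).indicator g y) :=
  (hg.comp measurable_snd).indicator (measurableSet_lt (measurable_snd.dist measurable_fst)
    measurable_const)

lemma measurable_setLAverage_ball {g : E → ℝ≥0∞} (hg : Measurable g) (t : ℝ) :
    Measurable fun z => ⨍⁻ y in ball z t, g y ∂μ := by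
  simp_rw [setLAverage_eq, Measure.addHaar_ball_center μ _ t,
    ← lintegral_indicator measurableSet_ball]
  exact ((measurable_uncurry_indicator_ball hg t).lintegral_prod_right').div_const _

lemma setLIntegral_setLAverage_ball_le {g : E → ℝ≥0∞} (hg : Measurable g) (x : E) {ρ t : ℝ}
    (ht : 0 < t) :
    ∫⁻ z in ball x ρ, ⨍⁻ y in ball z t, g y ∂μ ∂μ ≤ ∫⁻ y in ball x (ρ + t), g y ∂μ := by
  set S := ball x (ρ + t)
  have hinner : ∀ z ∈ ball x ρ, ∫⁻ y in ball z t, g y ∂μ =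
      ∫⁻ y in S, (ball z t).indicator g y ∂μ := by
    intro z hz
    have hzS : ball z t ⊆ S :=
      ball_subset_ball' (by rw [add_comm]; gcongr; exact (mem_ball.mp hz).le)
    rw [lintegral_indicator measurableSet_ball, Measure.restrict_restrict measurableSet_ball,
      Set.inter_eq_left.mpr hzS]
  have hswap : ∫⁻ z, ∫⁻ y in S, (ball z t).indicator g y ∂μ ∂μ =
      μ (ball 0 t) * ∫⁻ y in S, g y ∂μ := by
    rw [lintegral_lintegral_swap (measurable_uncurry_indicator_ball hg t).aemeasurable,
      ← lintegral_const_mul _ hg]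
    refine setLIntegral_congr_fun measurableSet_ball fun y _ => ?_
    have hsymm : (fun z => (ball z t).indicator g y) = (ball y t).indicator fun _ => g y := by
      ext z
      simp only [Set.indicator, mem_ball, dist_comm]
    rw [hsymm, lintegral_indicator_const measurableSet_ball, Measure.addHaar_ball_center,
      mul_comm]
  calc ∫⁻ z in ball x ρ, ⨍⁻ y in ball z t, g y ∂μ ∂μ
      = (∫⁻ z in ball x ρ, ∫⁻ y in ball z t, g y ∂μ ∂μ) / μ (ball 0 t) := by
        simp_rw [setLAverage_eq, Measure.addHaar_ball_center μ _ t, div_eq_mul_inv]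
        exact lintegral_mul_const' _ _ (ENNReal.inv_ne_top.mpr (measure_ball_pos μ 0 ht).ne')
    _ ≤ (∫⁻ z, ∫⁻ y in S, (ball z t).indicator g y ∂μ ∂μ) / μ (ball 0 t) :=
        ENNReal.div_le_div_right ((setLIntegral_congr_fun measurableSet_ball hinner).trans_le
          (setLIntegral_le_lintegral _ _)) _
    _ = ∫⁻ y in S, g y ∂μ := by
        rw [hswap, mul_comm,
          ENNReal.mul_div_cancel_right (measure_ball_pos μ 0 ht).ne' measure_ball_lt_top.ne]

lemma setLIntegral_tsum_rpow_mul_setLAverage_le {g : E → ℝ≥0∞} (hg : Measurable g) (α : ℝ)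
    (x : E) {ρ : ℝ} (hρ : 0 < ρ) :
    ∫⁻ z in ball x ρ,
        ∑' k : ℕ, ENNReal.ofReal ((ρ / 2 ^ k) ^ α) * ⨍⁻ y in ball z (ρ / 2 ^ k), g y ∂μ ∂μ ≤
      ENNReal.ofReal (ρ ^ α) * (1 - 2 ^ (-α))⁻¹ * ∫⁻ y in ball x (2 * ρ), g y ∂μ := by
  rw [lintegral_tsum fun k => ((measurable_setLAverage_ball μ hg _).const_mul _).aemeasurable,
    ← tsum_ofReal_rpow_div_two_pow hρ.le, ← ENNReal.tsum_mul_right]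
  refine ENNReal.tsum_le_tsum fun k => ?_
  have hk : ρ + ρ / 2 ^ k ≤ 2 * ρ := by
    have : ρ / 2 ^ k ≤ ρ := div_le_self hρ.le (one_le_pow₀ one_le_two)
    linarith
  rw [lintegral_const_mul _ (measurable_setLAverage_ball μ hg _)]
  exact mul_le_mul_right ((setLIntegral_setLAverage_ball_le μ hg x (by positivity)).trans
    (lintegral_mono_set (ball_subset_ball hk))) _

end AddHaar

section FracMaxLt

variable {n : ℕ} {α r : ℝ} {g : EuclideanSpace ℝ (Fin n) → ℝ≥0∞}

lemma le_fracMaxLt (x : EuclideanSpace ℝ (Fin n)) {ρ : ℝ} (hρ : 0 < ρ) (hρr : ρ < r) :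
    ENNReal.ofReal (ρ ^ α) * ⨍⁻ y in ball x ρ, g y ∂volume ≤ fracMaxLt α r g x :=
  le_iSup_of_le ρ <| le_iSup_of_le hρ <| le_iSup_of_le hρr le_rfl

lemma fracMaxLt_le {x : EuclideanSpace ℝ (Fin n)} {c : ℝ≥0∞}
    (h : ∀ ρ : ℝ, 0 < ρ → ρ < r → ENNReal.ofReal (ρ ^ α) * ⨍⁻ y in ball x ρ, g y ∂volume ≤ c) :
    fracMaxLt α r g x ≤ c :=
  iSup₂_le fun ρ hρ => iSup_le (h ρ hρ)

lemma fracMaxLt_congr_ae {g' : EuclideanSpace ℝ (Fin n) → ℝ≥0∞} (h : g =ᵐ[volume] g') :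
    fracMaxLt α r g = fracMaxLt α r g' := by
  ext x
  simp_rw [fracMaxLt, laverage_congr (ae_restrict_of_ae h)]

lemma fracMaxLt_le_tsum_add (hα : 0 ≤ α) {x z : EuclideanSpace ℝ (Fin n)} {ρ : ℝ}
    (hz : z ∈ ball x ρ) :
    fracMaxLt α r g z ≤ 2 ^ n *
      ((∑' k : ℕ, ENNReal.ofReal ((ρ / 2 ^ k) ^ α) * ⨍⁻ y in ball z (ρ / 2 ^ k), g y ∂volume) +
        fracMaxLt α (2 * r) g x) := by
  refine fracMaxLt_le fun s hs hsr => ?_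
  rw [mul_add]
  rcases le_or_gt s ρ with hsρ | hρs
  · refine le_add_right ?_
    simpa using rpow_mul_setLAverage_ball_le_tsum volume hα z hs hsρ
  · refine le_add_left ?_
    have hzx : dist z x < ρ := hz
    have hρ : 0 < ρ := dist_nonneg.trans_lt hzx
    have hsub : ball z s ⊆ ball x (s + ρ) := ball_subset_ball' (by linarith)
    have h := rpow_mul_setLAverage_ball_le volume (g := g) hα hs (by linarith) (by linarith) hsub
    rw [finrank_euclideanSpace_fin] at h
    exact h.trans (mul_le_mul_right (le_fracMaxLt x (by linarith) (by linarith)) _)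

lemma rpow_mul_setLIntegral_ball_two_mul_le (hα : 0 ≤ α) (x : EuclideanSpace ℝ (Fin n))
    {ρ : ℝ} (hρ : 0 < ρ) (hρr : ρ < r) :
    ENNReal.ofReal (ρ ^ α) * ∫⁻ y in ball x (2 * ρ), g y ≤
      2 ^ n * fracMaxLt α (2 * r) g x * volume (ball x ρ) := by
  set V := 2 ^ n * volume (ball x ρ)
  have hV : volume (ball x (2 * ρ)) = V := by
    rw [Measure.addHaar_ball_mul_of_pos _ _ two_pos, ← Measure.addHaar_ball_center volume x,
      finrank_euclideanSpace_fin, ENNReal.ofReal_pow zero_le_two, ENNReal.ofReal_ofNat]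
  have hV0 : V ≠ 0 := mul_ne_zero (by simp) (measure_ball_pos _ _ hρ).ne'
  have hVtop : V ≠ ⊤ := mul_ne_top (by simp) measure_ball_lt_top.ne
  have hM := le_fracMaxLt (g := g) (α := α) x (by positivity : 0 < 2 * ρ)
    (by linarith : 2 * ρ < 2 * r)
  rw [setLAverage_eq, hV] at hM
  calc ENNReal.ofReal (ρ ^ α) * ∫⁻ y in ball x (2 * ρ), g y
      ≤ ENNReal.ofReal ((2 * ρ) ^ α) * ((∫⁻ y in ball x (2 * ρ), g y) / V) * V := by
        rw [mul_assoc, ENNReal.div_mul_cancel hV0 hVtop]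
        gcongr
        linarith
    _ ≤ fracMaxLt α (2 * r) g x * V := by gcongr
    _ = 2 ^ n * fracMaxLt α (2 * r) g x * volume (ball x ρ) := by ring

theorem fracMaxLt_zero_fracMaxLt_le (hα : 0 < α) (hg : Measurable g)
    (x : EuclideanSpace ℝ (Fin n)) :
    fracMaxLt 0 r (fracMaxLt α r g) x ≤
      2 ^ n * (2 ^ n * (1 - 2 ^ (-α))⁻¹ + 1) * fracMaxLt α (2 * r) g x := by
  refine fracMaxLt_le fun ρ hρ hρr => ?_
  rw [Real.rpow_zero, ENNReal.ofReal_one, one_mul, setLAverage_eq]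
  refine ENNReal.div_le_of_le_mul ?_
  set M := fracMaxLt α (2 * r) g x
  set B := ball x ρ
  calc ∫⁻ z in B, fracMaxLt α r g z
      ≤ ∫⁻ z in B, 2 ^ n * ((∑' k : ℕ, ENNReal.ofReal ((ρ / 2 ^ k) ^ α) *
          ⨍⁻ y in ball z (ρ / 2 ^ k), g y ∂volume) + M) :=
        setLIntegral_mono' measurableSet_ball fun z hz => fracMaxLt_le_tsum_add hα.le hz
    _ = 2 ^ n * ((∫⁻ z in B, ∑' k : ℕ, ENNReal.ofReal ((ρ / 2 ^ k) ^ α) *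
          ⨍⁻ y in ball z (ρ / 2 ^ k), g y ∂volume) + M * volume B) := by
        rw [lintegral_const_mul' _ _ (by simp), lintegral_add_right _ measurable_const,
          setLIntegral_const]
    _ ≤ 2 ^ n * ((1 - 2 ^ (-α))⁻¹ * (ENNReal.ofReal (ρ ^ α) * ∫⁻ y in ball x (2 * ρ), g y)
          + M * volume B) := by
        rw [← mul_assoc, mul_comm _ (ENNReal.ofReal _)]
        gcongr
        exact setLIntegral_tsum_rpow_mul_setLAverage_le volume hg α x hρ
    _ ≤ 2 ^ n * ((1 - 2 ^ (-α))⁻¹ * (2 ^ n * M * volume B) + M * volume B) := by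
        exact mul_le_mul_right (add_le_add_left (mul_le_mul_right
          (rpow_mul_setLIntegral_ball_two_mul_le hα.le x hρ hρr) _) _) _
    _ = 2 ^ n * (2 ^ n * (1 - 2 ^ (-α))⁻¹ + 1) * M * volume B := by ring

end FracMaxLt

theorem stmt6_general (n : ℕ) (α : ℝ) (hα0 : 0 < α) :
    ∃ C : ℝ, 0 < C ∧
      ∀ r : ℝ, 0 < r →
        ∀ f : EuclideanSpace ℝ (Fin n) → ℝ, LocallyIntegrable f volume →
          ∀ x : EuclideanSpace ℝ (Fin n),
            fracMaxLt 0 r (fracMaxLt α r (fun y => ENNReal.ofReal |f y|)) x ≤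
              ENNReal.ofReal C *
                fracMaxLt α (2 * r) (fun y => ENNReal.ofReal |f y|) x := by
  set D : ℝ≥0∞ := 2 ^ n * (2 ^ n * (1 - 2 ^ (-α))⁻¹ + 1)
  have hD0 : D ≠ 0 := by simp [D]
  have hDtop : D ≠ ⊤ := by
    have hq : (2 : ℝ≥0∞) ^ (-α) < 1 :=
      ENNReal.rpow_lt_one_of_one_lt_of_neg one_lt_two (neg_neg_of_pos hα0)
    have hinv : (1 - (2 : ℝ≥0∞) ^ (-α))⁻¹ ≠ ⊤ := ENNReal.inv_ne_top.mpr (tsub_pos_of_lt hq).ne'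
    exact mul_ne_top (by simp) (add_ne_top.mpr ⟨mul_ne_top (by simp) hinv, one_ne_top⟩)
  refine ⟨D.toReal, ENNReal.toReal_pos hD0 hDtop, fun r _ f hf x => ?_⟩
  have hg : AEMeasurable (fun y => ENNReal.ofReal |f y|) volume :=
    hf.aestronglyMeasurable.aemeasurable.abs.ennreal_ofReal
  rw [ENNReal.ofReal_toReal hDtop, fracMaxLt_congr_ae hg.ae_eq_mk,
    fracMaxLt_congr_ae hg.ae_eq_mk]
  exact fracMaxLt_zero_fracMaxLt_le hα0 hg.measurable_mk x

/-- there exists `C = C(n, α)` such that for every `r > 0`,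
`Mʳ(Mʳ_α f)(x) ≤ C M^{2r}_α f(x)`. -/
theorem stmt6 (n : ℕ) (hn : 1 ≤ n) (α : ℝ) (hα0 : 0 < α) (hαn : α < n) :
    ∃ C : ℝ, 0 < C ∧
      ∀ r : ℝ, 0 < r →
        ∀ f : EuclideanSpace ℝ (Fin n) → ℝ, LocallyIntegrable f volume →
          ∀ x : EuclideanSpace ℝ (Fin n),
            fracMaxLt 0 r (fracMaxLt α r (fun y => ENNReal.ofReal |f y|)) x ≤
              ENNReal.ofReal C *
                fracMaxLt α (2 * r) (fun y => ENNReal.ofReal |f y|) x :=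
  stmt6_general n α hα0
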